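/- If \(f\) is a function on the unit hyperboloid \(\mathscr{H}\) solving the translation equation \(D_aD_bf + h_{ab}f = 0\), then \(f(\eta) = v^a\eta_a\) for a constant Minkowski vector \(v^a\), and hence \(f\) is odd under the antipodal map \(\eta \mapsto -\eta\); therefore, if such a solution \(f\) is also even under the antipodal map, then \(f = 0\) identically. -/

import Mathlib

noncomputable section

/-- 4-dimensional Minkowski space, as `ℝ⁴`. -/
abbrev M4 := Fin 4 → ℝ

/-- The diagonal of the Minkowski metric, signature `(-,+,+,+)`. -/
def gd : Fin 4 → ℝ := fun i => if i = 0 then -1 else 1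

/-- The Minkowski inner product. -/
def mink (u v : M4) : ℝ := ∑ i : Fin 4, gd i * u i * v i

/-- The unit timelike hyperboloid `ℋ` of unit spacelike vectors. -/
def Hyp : Set M4 := {η | mink η η = 1}

/-- The tangent space to `ℋ` at `η`: vectors Minkowski-orthogonal to `η`. -/
def Tangent (η : M4) : Set M4 := {u | mink η u = 0}

/-- Orthogonal projection onto the tangent space of `ℋ` at `η`. -/
def proj (η u : M4) : M4 := u - mink η u • η

/-- The Levi-Civita covariant derivative on `ℋ` induced from Minkowski space:
the tangential projection of the ambient directional derivative. -/
def covD (η u : M4) (Y : M4 → M4) : M4 := proj η (fderiv ℝ Y η u)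

/-- The intrinsic Hessian `D_aD_bf` of a scalar field on `ℋ`, evaluated on tangent
vectors `u, w` at `η ∈ ℋ` (using the tangential extension `p ↦ proj p w` of `w`). -/
def Hess (f : M4 → ℝ) (η u w : M4) : ℝ :=
  fderiv ℝ (fun p => fderiv ℝ f p (proj p w)) η u
    - fderiv ℝ f η (proj η (fderiv ℝ (fun p => proj p w) η u))

-- expansion
lemma mink_expand (u v : M4) :
    mink u v = -(u 0 * v 0) + u 1 * v 1 + u 2 * v 2 + u 3 * v 3 := by
  simp [mink, Fin.sum_univ_four, gd]

lemma mink_comm (u v : M4) : mink u v = mink v u := by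
  simp [mink_expand]; ring

/-- mink as a CLM in the first argument. -/
def minkCLM (w : M4) : M4 →L[ℝ] ℝ :=
  ∑ i : Fin 4, (gd i * w i) • (ContinuousLinearMap.proj (R := ℝ) (φ := fun _ : Fin 4 => ℝ) i)

lemma minkCLM_apply (w p : M4) : minkCLM w p = mink p w := by
  simp [minkCLM, mink, ContinuousLinearMap.sum_apply]
  exact Finset.sum_congr rfl fun i _ => by ring

lemma hasFDerivAt_mink (w p : M4) : HasFDerivAt (fun q => mink q w) (minkCLM w) p := by
  have : (fun q => mink q w) = fun q => minkCLM w q := by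
    funext q; rw [minkCLM_apply]
  rw [this]
  exact (minkCLM w).hasFDerivAt

lemma mink_smul_left (c : ℝ) (u v : M4) : mink (c • u) v = c * mink u v := by
  simp [mink_expand]; ring

lemma mink_neg_left (u v : M4) : mink (-u) v = -mink u v := by
  simp [mink_expand]; ring


/-- Derivative of the projection map in its base point. -/
lemma hasFDerivAt_proj (η w : M4) :
    HasFDerivAt (fun p => proj p w)
      (-(mink η w • ContinuousLinearMap.id ℝ M4 + (minkCLM w).smulRight η)) η := by
  have h1 : HasFDerivAt (fun p : M4 => mink p w • p)
      (mink η w • ContinuousLinearMap.id ℝ M4 + (minkCLM w).smulRight η) η := by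
    simpa using (hasFDerivAt_mink w η).smul (hasFDerivAt_id η)
  have h2 := (hasFDerivAt_const w η).sub h1
  simpa [proj] using h2

lemma hess_eq (f : M4 → ℝ) (hf : ContDiff ℝ (⊤ : ℕ∞) f) {η u w : M4} (hη : η ∈ Hyp)
    (hw : w ∈ Tangent η) :
    Hess f η u w = fderiv ℝ (fderiv ℝ f) η u w - mink u w * fderiv ℝ f η η := by
  have hη1 : mink η η = 1 := hη
  have hw0 : mink η w = 0 := hw
  have hA : Differentiable ℝ (fderiv ℝ f) :=
    (hf.fderiv_right (m := 1) (WithTop.coe_le_coe.mpr le_top)).differentiable one_ne_zero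
  set P : M4 →L[ℝ] M4 :=
    -(mink η w • ContinuousLinearMap.id ℝ M4 + (minkCLM w).smulRight η) with hP
  have hproj : HasFDerivAt (fun p => proj p w) P η := hasFDerivAt_proj η w
  have hPu : ∀ u : M4, P u = -(mink η w • u + mink u w • η) := by
    intro u
    simp [hP, ContinuousLinearMap.smulRight_apply, minkCLM_apply]
  -- derivative of Φ p = fderiv f p (proj p w)
  have hΦ : HasFDerivAt (fun p => fderiv ℝ f p (proj p w))
      ((fderiv ℝ f η).comp P + (fderiv ℝ (fderiv ℝ f) η).flip (proj η w)) η :=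
    HasFDerivAt.clm_apply (hA η).hasFDerivAt hproj
  have hprojηw : proj η w = w := by simp [proj, hw0]
  have e1 : fderiv ℝ (fun p => fderiv ℝ f p (proj p w)) η u
      = fderiv ℝ f η (P u) + fderiv ℝ (fderiv ℝ f) η u w := by
    rw [hΦ.fderiv]
    simp [hprojηw]
  have e2 : fderiv ℝ (fun p => proj p w) η u = P u := by rw [hproj.fderiv]
  have e3 : proj η (P u) = 0 := by
    have hm : mink η (-(mink u w • η)) = -(mink u w) := by
      rw [mink_comm, mink_neg_left, mink_smul_left, hη1]; ring
    rw [hPu u, hw0]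
    simp only [zero_smul, zero_add, proj, hm]
    module
  rw [Hess, e1, e2, e3]
  rw [hPu u, hw0]
  simp [mink_smul_left]
  ring

lemma mink_bilin (a b c d : ℝ) (x y : M4) :
    mink (a • x + b • y) (c • x + d • y)
      = a * c * mink x x + (a * d + b * c) * mink x y + b * d * mink y y := by
  simp [mink_expand, Pi.add_apply, Pi.smul_apply, smul_eq_mul]
  ring

lemma ode_sin (G G' : ℝ → ℝ) (h1 : ∀ t, HasDerivAt G (G' t) t)
    (h2 : ∀ t, HasDerivAt G' (-G t) t) (h0 : G 0 = 0) (h0' : G' 0 = 0) :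
    ∀ t, G t = 0 ∧ G' t = 0 := by
  have hE : ∀ t, HasDerivAt (fun t => G t ^ 2 + G' t ^ 2) 0 t := by
    intro t
    have h := (((h1 t).pow 2)).add ((h2 t).pow 2)
    refine h.congr_deriv ?_
    ring
  have hconst : ∀ t, G t ^ 2 + G' t ^ 2 = G 0 ^ 2 + G' 0 ^ 2 := by
    intro t
    exact is_const_of_deriv_eq_zero (fun s => (hE s).differentiableAt)
      (fun s => (hE s).deriv) t 0
  intro t
  have h := hconst t
  rw [h0, h0'] at h
  constructor <;> nlinarith [h]

lemma ode_exp (G G' : ℝ → ℝ) (h1 : ∀ t, HasDerivAt G (G' t) t)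
    (h2 : ∀ t, HasDerivAt G' (G t) t) (h0 : G 0 = 0) (h0' : G' 0 = 0) :
    ∀ t, G t = 0 := by
  have hexp : ∀ t : ℝ, HasDerivAt (fun t : ℝ => Real.exp (-t)) (-Real.exp (-t)) t := by
    intro t
    have h := (Real.hasDerivAt_exp (-t)).comp t (hasDerivAt_neg' t)
    simpa [Function.comp_def] using h
  have hP : ∀ t, HasDerivAt (fun t => (G t + G' t) * Real.exp (-t)) 0 t := by
    intro t
    have h := ((h1 t).add (h2 t)).mul (hexp t)
    refine h.congr_deriv ?_
    rw [Pi.add_apply]; ring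
  have hPc : ∀ t, (G t + G' t) * Real.exp (-t) = 0 := by
    intro t
    have h := is_const_of_deriv_eq_zero (fun s => (hP s).differentiableAt)
      (fun s => (hP s).deriv) t 0
    rw [h, h0, h0']
    simp
  have hGG' : ∀ t, G' t = -G t := by
    intro t
    have h := hPc t
    have he : Real.exp (-t) ≠ 0 := (Real.exp_pos _).ne'
    have := mul_eq_zero.mp h
    rcases this with h' | h'
    · linarith
    · exact absurd h' he
  have hQ : ∀ t, HasDerivAt (fun t => G t * Real.exp t) 0 t := by
    intro t
    have h := (h1 t).mul (Real.hasDerivAt_exp t)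
    rw [hGG' t] at h
    refine h.congr_deriv ?_
    ring
  intro t
  have h := is_const_of_deriv_eq_zero (fun s => (hQ s).differentiableAt)
    (fun s => (hQ s).deriv) t 0
  rw [h0, zero_mul] at h
  have he : Real.exp t ≠ 0 := (Real.exp_pos _).ne'
  rcases mul_eq_zero.mp h with h' | h'
  · exact h'
  · exact absurd h' he

lemma ode_lin (G G' : ℝ → ℝ) (h1 : ∀ t, HasDerivAt G (G' t) t)
    (h2 : ∀ t, HasDerivAt G' 0 t) (h0 : G 0 = 0) (h0' : G' 0 = 0) :
    ∀ t, G t = 0 := by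
  have hG' : ∀ t, G' t = 0 := by
    intro t
    have h := is_const_of_deriv_eq_zero (fun s => (h2 s).differentiableAt)
      (fun s => (h2 s).deriv) t 0
    rw [h, h0']
  intro t
  have h1' : ∀ t, HasDerivAt G 0 t := fun t => hG' t ▸ h1 t
  have h := is_const_of_deriv_eq_zero (fun s => (h1' s).differentiableAt)
    (fun s => (h1' s).deriv) t 0
  rw [h, h0]

lemma hasDerivAt_comp2 (g : M4 → ℝ) (hg : ContDiff ℝ (⊤ : ℕ∞) g) (γ γ₁ : ℝ → M4)
    (hγ : ∀ t, HasDerivAt γ (γ₁ t) t) (t : ℝ) (γ₂t : M4) (hγ₁ : HasDerivAt γ₁ γ₂t t) :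
    HasDerivAt (fun s => g (γ s)) (fderiv ℝ g (γ t) (γ₁ t)) t ∧
    HasDerivAt (fun s => fderiv ℝ g (γ s) (γ₁ s))
      (fderiv ℝ (fderiv ℝ g) (γ t) (γ₁ t) (γ₁ t) + fderiv ℝ g (γ t) γ₂t) t := by
  have hgd := hg.differentiable (by simp)
  have hA : Differentiable ℝ (fderiv ℝ g) := (hg.fderiv_right (m := 1) (WithTop.coe_le_coe.mpr le_top)).differentiable one_ne_zero
  constructor
  · exact (hgd (γ t)).hasFDerivAt.comp_hasDerivAt t (hγ t)
  · have hc : HasDerivAt (fun s => fderiv ℝ g (γ s)) (fderiv ℝ (fderiv ℝ g) (γ t) (γ₁ t)) t :=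
      (hA (γ t)).hasFDerivAt.comp_hasDerivAt t (hγ t)
    exact hc.clm_apply hγ₁

section propagate

variable (g : M4 → ℝ)

def Sol (g : M4 → ℝ) : Prop :=
  ∀ η ∈ Hyp, ∀ u ∈ Tangent η,
    fderiv ℝ (fderiv ℝ g) η u u = mink u u * (fderiv ℝ g η η - g η)

lemma propagate_sc (hg : ContDiff ℝ (⊤ : ℕ∞) g) (hsol : Sol g)
    (η₀ u : M4) (hη₀ : mink η₀ η₀ = 1) (htan : mink η₀ u = 0) (huu : mink u u = 1)
    (hg0 : g η₀ = 0) (hg0' : fderiv ℝ g η₀ u = 0) (t : ℝ) :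
    g (Real.cos t • η₀ + Real.sin t • u) = 0 ∧
      fderiv ℝ g (Real.cos t • η₀ + Real.sin t • u)
        (-Real.sin t • η₀ + Real.cos t • u) = 0 := by
  set γ : ℝ → M4 := fun s => Real.cos s • η₀ + Real.sin s • u with hγdef
  set γ₁ : ℝ → M4 := fun s => -Real.sin s • η₀ + Real.cos s • u with hγ₁def
  have hγ : ∀ s, HasDerivAt γ (γ₁ s) s := fun s =>
    ((Real.hasDerivAt_cos s).smul_const η₀).add ((Real.hasDerivAt_sin s).smul_const u)
  have hγ₁ : ∀ s, HasDerivAt γ₁ (-γ s) s := by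
    intro s
    have h := (((Real.hasDerivAt_sin s).neg).smul_const η₀).add
      (((Real.hasDerivAt_cos s)).smul_const u)
    refine h.congr_deriv ?_
    simp only [hγdef]
    module
  have hmem : ∀ s, γ s ∈ Hyp := by
    intro s
    show mink _ _ = 1
    simp only [hγdef]
    rw [mink_bilin, hη₀, htan, huu]
    linear_combination Real.sin_sq_add_cos_sq s
  have htang : ∀ s, γ₁ s ∈ Tangent (γ s) := by
    intro s
    show mink _ _ = 0
    simp only [hγdef, hγ₁def]
    rw [mink_bilin, hη₀, htan, huu]
    ring
  have huu' : ∀ s, mink (γ₁ s) (γ₁ s) = 1 := by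
    intro s
    simp only [hγ₁def]
    rw [mink_bilin, hη₀, htan, huu]
    linear_combination Real.sin_sq_add_cos_sq s
  set G : ℝ → ℝ := fun s => g (γ s) with hG
  set G' : ℝ → ℝ := fun s => fderiv ℝ g (γ s) (γ₁ s) with hG'
  have h1 : ∀ s, HasDerivAt G (G' s) s := fun s =>
    (hasDerivAt_comp2 g hg γ γ₁ hγ s (-γ s) (hγ₁ s)).1
  have h2 : ∀ s, HasDerivAt G' (-G s) s := by
    intro s
    have h := (hasDerivAt_comp2 g hg γ γ₁ hγ s (-γ s) (hγ₁ s)).2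
    have e : fderiv ℝ (fderiv ℝ g) (γ s) (γ₁ s) (γ₁ s) + fderiv ℝ g (γ s) (-γ s) = -G s := by
      rw [hsol (γ s) (hmem s) (γ₁ s) (htang s), huu' s, map_neg]
      simp only [hG]
      ring
    rw [e] at h
    exact h
  have h0 : G 0 = 0 := by
    have : γ 0 = η₀ := by simp [hγdef]
    rw [hG]; simp only [this]; exact hg0
  have h0' : G' 0 = 0 := by
    have e1 : γ 0 = η₀ := by simp [hγdef]
    have e2 : γ₁ 0 = u := by simp [hγ₁def]
    rw [hG']; simp only [e1, e2]; exact hg0'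
  exact ode_sin G G' h1 h2 h0 h0' t

lemma propagate_ch (hg : ContDiff ℝ (⊤ : ℕ∞) g) (hsol : Sol g)
    (η₀ u : M4) (hη₀ : mink η₀ η₀ = 1) (htan : mink η₀ u = 0) (huu : mink u u = -1)
    (hg0 : g η₀ = 0) (hg0' : fderiv ℝ g η₀ u = 0) (t : ℝ) :
    g (Real.cosh t • η₀ + Real.sinh t • u) = 0 := by
  set γ : ℝ → M4 := fun s => Real.cosh s • η₀ + Real.sinh s • u with hγdef
  set γ₁ : ℝ → M4 := fun s => Real.sinh s • η₀ + Real.cosh s • u with hγ₁def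
  have hγ : ∀ s, HasDerivAt γ (γ₁ s) s := fun s =>
    ((Real.hasDerivAt_cosh s).smul_const η₀).add ((Real.hasDerivAt_sinh s).smul_const u)
  have hγ₁ : ∀ s, HasDerivAt γ₁ (γ s) s := fun s =>
    ((Real.hasDerivAt_sinh s).smul_const η₀).add ((Real.hasDerivAt_cosh s).smul_const u)
  have hmem : ∀ s, γ s ∈ Hyp := by
    intro s
    show mink _ _ = 1
    simp only [hγdef]
    rw [mink_bilin, hη₀, htan, huu]
    linear_combination Real.cosh_sq_sub_sinh_sq s
  have htang : ∀ s, γ₁ s ∈ Tangent (γ s) := by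
    intro s
    show mink _ _ = 0
    simp only [hγdef, hγ₁def]
    rw [mink_bilin, hη₀, htan, huu]
    ring
  have huu' : ∀ s, mink (γ₁ s) (γ₁ s) = -1 := by
    intro s
    simp only [hγ₁def]
    rw [mink_bilin, hη₀, htan, huu]
    linear_combination (-1 : ℝ) * Real.cosh_sq_sub_sinh_sq s
  set G : ℝ → ℝ := fun s => g (γ s) with hG
  set G' : ℝ → ℝ := fun s => fderiv ℝ g (γ s) (γ₁ s) with hG'
  have h1 : ∀ s, HasDerivAt G (G' s) s := fun s =>
    (hasDerivAt_comp2 g hg γ γ₁ hγ s (γ s) (hγ₁ s)).1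
  have h2 : ∀ s, HasDerivAt G' (G s) s := by
    intro s
    have h := (hasDerivAt_comp2 g hg γ γ₁ hγ s (γ s) (hγ₁ s)).2
    have e : fderiv ℝ (fderiv ℝ g) (γ s) (γ₁ s) (γ₁ s) + fderiv ℝ g (γ s) (γ s) = G s := by
      rw [hsol (γ s) (hmem s) (γ₁ s) (htang s), huu' s]
      simp only [hG]
      ring
    rw [e] at h
    exact h
  have h0 : G 0 = 0 := by
    have : γ 0 = η₀ := by simp [hγdef]
    rw [hG]; simp only [this]; exact hg0
  have h0' : G' 0 = 0 := by
    have e1 : γ 0 = η₀ := by simp [hγdef]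
    have e2 : γ₁ 0 = u := by simp [hγ₁def]
    rw [hG']; simp only [e1, e2]; exact hg0'
  exact ode_exp G G' h1 h2 h0 h0' t

lemma propagate_null (hg : ContDiff ℝ (⊤ : ℕ∞) g) (hsol : Sol g)
    (η₀ u : M4) (hη₀ : mink η₀ η₀ = 1) (htan : mink η₀ u = 0) (huu : mink u u = 0)
    (hg0 : g η₀ = 0) (hg0' : fderiv ℝ g η₀ u = 0) (t : ℝ) :
    g (η₀ + t • u) = 0 := by
  set γ : ℝ → M4 := fun s => η₀ + s • u with hγdef
  set γ₁ : ℝ → M4 := fun _ => u with hγ₁def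
  have hγ : ∀ s, HasDerivAt γ (γ₁ s) s := by
    intro s
    have h := (hasDerivAt_const s η₀).add ((hasDerivAt_id s).smul_const u)
    exact h.congr_deriv (by simp [hγ₁def])
  have hγ₁ : ∀ s, HasDerivAt γ₁ 0 s := fun s => hasDerivAt_const s u
  have hη₀' := hη₀; have htan' := htan; have huu' := huu
  rw [mink_expand] at hη₀' htan' huu'
  have hmem : ∀ s, γ s ∈ Hyp := by
    intro s
    show mink _ _ = 1
    simp only [hγdef, mink_expand, Pi.add_apply, Pi.smul_apply, smul_eq_mul]
    linear_combination hη₀' + 2 * s * htan' + s ^ 2 * huu'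
  have htang : ∀ s, γ₁ s ∈ Tangent (γ s) := by
    intro s
    show mink _ _ = 0
    simp only [hγdef, hγ₁def, mink_expand, Pi.add_apply, Pi.smul_apply, smul_eq_mul]
    linear_combination htan' + s * huu'
  set G : ℝ → ℝ := fun s => g (γ s) with hG
  set G' : ℝ → ℝ := fun s => fderiv ℝ g (γ s) (γ₁ s) with hG'
  have h1 : ∀ s, HasDerivAt G (G' s) s := fun s =>
    (hasDerivAt_comp2 g hg γ γ₁ hγ s 0 (hγ₁ s)).1
  have h2 : ∀ s, HasDerivAt G' 0 s := by
    intro s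
    have h := (hasDerivAt_comp2 g hg γ γ₁ hγ s 0 (hγ₁ s)).2
    have e : fderiv ℝ (fderiv ℝ g) (γ s) (γ₁ s) (γ₁ s) + fderiv ℝ g (γ s) 0 = 0 := by
      rw [hsol (γ s) (hmem s) (γ₁ s) (htang s), map_zero]
      have : mink (γ₁ s) (γ₁ s) = 0 := huu
      rw [this]
      ring
    rw [e] at h
    exact h
  have h0 : G 0 = 0 := by
    have : γ 0 = η₀ := by simp [hγdef]
    rw [hG]; simp only [this]; exact hg0
  have h0' : G' 0 = 0 := by
    have e1 : γ 0 = η₀ := by simp [hγdef]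
    rw [hG']; simp only [e1, hγ₁def]; exact hg0'
  exact ode_lin G G' h1 h2 h0 h0' t

end propagate

lemma reach (g : M4 → ℝ) (hg : ContDiff ℝ (⊤ : ℕ∞) g) (hsol : Sol g)
    (b : M4) (hb : mink b b = 1) (hg0 : g b = 0)
    (hg0' : ∀ u, mink b u = 0 → fderiv ℝ g b u = 0) :
    ∀ η, mink η η = 1 → -1 < mink b η → g η = 0 := by
  intro η hη hcgt
  set c := mink b η with hcdef
  have hc' : mink b η = c := rfl
  have hb' := hb; have hη' := hη
  rw [mink_expand] at hb' hη' hc'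
  rcases lt_trichotomy c 1 with hlt | heq1 | hgt
  · -- spacelike case
    have h1c : 0 < 1 - c ^ 2 := by nlinarith
    set s := Real.sqrt (1 - c ^ 2) with hs
    have hs0 : 0 < s := Real.sqrt_pos.mpr h1c
    have hs2 : s ^ 2 = 1 - c ^ 2 := Real.sq_sqrt h1c.le
    set u : M4 := s⁻¹ • (η - c • b) with hu
    have htan : mink b u = 0 := by
      simp only [hu, mink_expand, Pi.smul_apply, Pi.sub_apply, smul_eq_mul]
      linear_combination s⁻¹ * hc' - s⁻¹ * c * hb'
    have huu : mink u u = 1 := by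
      have e : mink u u = s⁻¹ * s⁻¹ * (1 - c ^ 2) := by
        simp only [hu, mink_expand, Pi.smul_apply, Pi.sub_apply, smul_eq_mul]
        linear_combination s⁻¹ * s⁻¹ * (hη' - 2 * c * hc' + c ^ 2 * hb')
      rw [e, ← hs2]
      field_simp
    have hcc : Real.cos (Real.arccos c) = c := Real.cos_arccos (by linarith) (by linarith)
    have hss : Real.sin (Real.arccos c) = s := by rw [Real.sin_arccos]
    have hγ : Real.cos (Real.arccos c) • b + Real.sin (Real.arccos c) • u = η := by
      rw [hcc, hss, hu, smul_smul, mul_inv_cancel₀ hs0.ne']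
      module
    have h := (propagate_sc g hg hsol b u hb htan huu hg0 (hg0' u htan) (Real.arccos c)).1
    rwa [hγ] at h
  · -- null case
    set u : M4 := η - b with hu
    have htan : mink b u = 0 := by
      simp only [hu, mink_expand, Pi.sub_apply]
      linear_combination hc' - hb' + heq1
    have huu : mink u u = 0 := by
      simp only [hu, mink_expand, Pi.sub_apply]
      linear_combination hη' - 2 * hc' + hb' - 2 * heq1
    have hγ : b + (1 : ℝ) • u = η := by
      rw [hu]; module
    have h := propagate_null g hg hsol b u hb htan huu hg0 (hg0' u htan) 1
    rwa [hγ] at h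
  · -- timelike case
    have h1c : 0 < c ^ 2 - 1 := by nlinarith
    set s := Real.sqrt (c ^ 2 - 1) with hs
    have hs0 : 0 < s := Real.sqrt_pos.mpr h1c
    have hs2 : s ^ 2 = c ^ 2 - 1 := Real.sq_sqrt h1c.le
    set u : M4 := s⁻¹ • (η - c • b) with hu
    have htan : mink b u = 0 := by
      simp only [hu, mink_expand, Pi.smul_apply, Pi.sub_apply, smul_eq_mul]
      linear_combination s⁻¹ * hc' - s⁻¹ * c * hb'
    have huu : mink u u = -1 := by
      have e : mink u u = s⁻¹ * s⁻¹ * (1 - c ^ 2) := by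
        simp only [hu, mink_expand, Pi.smul_apply, Pi.sub_apply, smul_eq_mul]
        linear_combination s⁻¹ * s⁻¹ * (hη' - 2 * c * hc' + c ^ 2 * hb')
      rw [e]
      have e2 : (1 : ℝ) - c ^ 2 = -(s ^ 2) := by rw [hs2]; ring
      rw [e2]
      field_simp
    have hcs : 0 < c + s := by linarith
    have hmul : (c + s) * (c - s) = 1 := by nlinarith [hs2]
    have hinv : (c + s)⁻¹ = c - s := inv_eq_of_mul_eq_one_right hmul
    set t := Real.log (c + s) with ht
    have hch : Real.cosh t = c := by
      rw [ht, Real.cosh_log hcs, hinv]; ring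
    have hsh : Real.sinh t = s := by
      rw [ht, Real.sinh_log hcs, hinv]; ring
    have hγ : Real.cosh t • b + Real.sinh t • u = η := by
      rw [hch, hsh, hu, smul_smul, mul_inv_cancel₀ hs0.ne']
      module
    have h := propagate_ch g hg hsol b u hb htan huu hg0 (hg0' u htan) t
    rwa [hγ] at h

def ee (i : Fin 4) : M4 := fun j => if j = i then 1 else 0

lemma vec_decomp (x : M4) : x = x 0 • ee 0 + x 1 • ee 1 + x 2 • ee 2 + x 3 • ee 3 := by
  funext j
  fin_cases j <;> simp [ee]

lemma clm_decomp (A : M4 →L[ℝ] ℝ) (x : M4) :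
    A x = x 0 * A (ee 0) + x 1 * A (ee 1) + x 2 * A (ee 2) + x 3 * A (ee 3) := by
  conv_lhs => rw [vec_decomp x]
  simp

lemma mink_ee1 : mink (ee 1) (ee 1) = 1 := by simp [mink_expand, ee]

lemma antipode_data (g : M4 → ℝ) (hg : ContDiff ℝ (⊤ : ℕ∞) g) (hsol : Sol g)
    (hg0 : g (ee 1) = 0) (hg0' : ∀ u, mink (ee 1) u = 0 → fderiv ℝ g (ee 1) u = 0) :
    g (-(ee 1)) = 0 ∧ ∀ u, mink (-(ee 1)) u = 0 → fderiv ℝ g (-(ee 1)) u = 0 := by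
  have hb : mink (ee 1) (ee 1) = 1 := mink_ee1
  have key : ∀ u, mink (ee 1) u = 0 → mink u u = 1 →
      g (-(ee 1)) = 0 ∧ fderiv ℝ g (-(ee 1)) u = 0 := by
    intro u htan huu
    have h := propagate_sc g hg hsol (ee 1) u hb htan huu hg0 (hg0' u htan) Real.pi
    have e1 : Real.cos Real.pi • ee 1 + Real.sin Real.pi • u = -(ee 1) := by
      rw [Real.cos_pi, Real.sin_pi]
      module
    have e2 : -Real.sin Real.pi • ee 1 + Real.cos Real.pi • u = -u := by
      rw [Real.cos_pi, Real.sin_pi]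
      module
    rw [e1, e2] at h
    refine ⟨h.1, ?_⟩
    have := h.2
    rwa [map_neg, neg_eq_zero] at this
  -- the three spacelike unit tangent vectors
  have h2 := key (ee 2) (by simp [mink_expand, ee]) (by simp [mink_expand, ee])
  have h3 := key (ee 3) (by simp [mink_expand, ee]) (by simp [mink_expand, ee])
  have h1 := key (Real.sinh 1 • ee 0 + Real.cosh 1 • ee 2)
    (by
      simp [mink_expand, ee])
    (by
      simp [mink_expand, ee]
      linear_combination Real.cosh_sq_sub_sinh_sq 1)
  refine ⟨h2.1, ?_⟩
  intro u htanu
  set A := fderiv ℝ g (-(ee 1)) with hA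
  have hA0 : A (ee 0) = 0 := by
    have h := h1.2
    rw [map_add, map_smul, map_smul] at h
    rw [h2.2] at h
    simp only [smul_eq_mul, mul_zero, add_zero] at h
    have hsh : Real.sinh 1 ≠ 0 := (Real.sinh_pos_iff.mpr one_pos).ne'
    rcases mul_eq_zero.mp h with h' | h'
    · exact absurd h' hsh
    · exact h'
  have hu1 : u 1 = 0 := by
    have h := htanu
    simp [mink_expand, ee] at h
    linarith [h]
  rw [clm_decomp A u, hA0, h2.2, h3.2, hu1]
  ring

lemma mink_ee1_apply (u : M4) : mink (ee 1) u = u 1 := by simp [mink_expand, ee]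


/-- Any solution of the translation equation `D_aD_bf + h_{ab}f = 0`
on `ℋ` is of the form `f(η) = v·η` for a constant Minkowski vector `v`, hence odd
under the antipodal map `η ↦ -η`; therefore a solution that is even under the
antipodal map vanishes identically. -/
theorem even_translation_function_vanishes (f : M4 → ℝ) (hf : ContDiff ℝ (⊤ : ℕ∞) f)
    (heq : ∀ η ∈ Hyp, ∀ u ∈ Tangent η, ∀ w ∈ Tangent η,
      Hess f η u w + mink u w * f η = 0) :
    (∃ v : M4, ∀ η ∈ Hyp, f η = mink v η) ∧
    ((∀ η ∈ Hyp, f (-η) = f η) → ∀ η ∈ Hyp, f η = 0) := by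
  have hfd : Differentiable ℝ f := hf.differentiable (by simp)
  set A₀ := fderiv ℝ f (ee 1) with hA₀
  set c₀ := f (ee 1) with hc₀
  set v : M4 := fun i =>
    if i = 0 then -A₀ (ee 0) else if i = 1 then c₀ else if i = 2 then A₀ (ee 2) else A₀ (ee 3)
    with hv
  have hLv : ∀ p : M4, mink v p = A₀ p + (c₀ - A₀ (ee 1)) * p 1 := by
    intro p
    rw [mink_expand, clm_decomp A₀ p]
    simp only [hv]
    simp
    ring
  -- setup g
  set g : M4 → ℝ := fun p => f p - mink v p with hgdef
  have hlin : ∀ p, HasFDerivAt (fun q : M4 => mink v q) (minkCLM v) p := by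
    intro p
    have h := hasFDerivAt_mink v p
    have e : (fun q => mink q v) = fun q : M4 => mink v q := by
      funext q; rw [mink_comm]
    rwa [e] at h
  have hgc : ContDiff ℝ (⊤ : ℕ∞) g := by
    have e : g = fun p => f p - minkCLM v p := by
      funext p
      rw [hgdef]
      simp only [minkCLM_apply, mink_comm]
    rw [e]
    exact hf.sub ((minkCLM v).contDiff)
  have hgfder : ∀ p, fderiv ℝ g p = fderiv ℝ f p - minkCLM v := by
    intro p
    exact ((hfd p).hasFDerivAt.sub (hlin p)).fderiv
  have hg2 : ∀ p, fderiv ℝ (fderiv ℝ g) p = fderiv ℝ (fderiv ℝ f) p := by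
    intro p
    have e : fderiv ℝ g = fun q => fderiv ℝ f q - minkCLM v := funext hgfder
    rw [e, fderiv_sub_const]
  have hsolg : Sol g := by
    intro η hη u hu
    have h := heq η hη u hu u hu
    rw [hess_eq f hf hη hu] at h
    have hf2 : fderiv ℝ (fderiv ℝ f) η u u = mink u u * (fderiv ℝ f η η - f η) := by
      linarith [h]
    rw [hg2 η, hf2, hgfder η, hgdef]
    simp only [ContinuousLinearMap.sub_apply, minkCLM_apply]
    rw [mink_comm η v]
    ring
  have hg0 : g (ee 1) = 0 := by
    rw [hgdef]
    simp only []
    rw [hLv (ee 1)]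
    have e1 : (ee 1) 1 = 1 := by simp [ee]
    rw [e1]
    simp only [hc₀, hA₀]
    ring
  have hg0' : ∀ u, mink (ee 1) u = 0 → fderiv ℝ g (ee 1) u = 0 := by
    intro u htan
    rw [mink_ee1_apply] at htan
    rw [hgfder (ee 1)]
    simp only [ContinuousLinearMap.sub_apply, minkCLM_apply]
    rw [mink_comm u v, hLv u, htan]
    simp only [hc₀, hA₀]
    ring
  -- part 1
  have part1 : ∀ η ∈ Hyp, f η = mink v η := by
    intro η hη
    have hη1 : mink η η = 1 := hη
    have key : g η = 0 := by
      by_cases hcase : -1 < mink (ee 1) η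
      · exact reach g hgc hsolg (ee 1) mink_ee1 hg0 hg0' η hη1 hcase
      · have hdata := antipode_data g hgc hsolg hg0 hg0'
        have hb : mink (-(ee 1)) (-(ee 1)) = 1 := by
          rw [mink_neg_left, mink_comm, mink_neg_left, mink_comm, mink_ee1]
          ring
        have hgt : -1 < mink (-(ee 1)) η := by
          rw [mink_neg_left]
          push_neg at hcase
          linarith
        exact reach g hgc hsolg (-(ee 1)) hb hdata.1 hdata.2 η hη1 hgt
    have := key
    rw [hgdef] at this
    simp only [] at this
    linarith [this]
  refine ⟨⟨v, part1⟩, ?_⟩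
  -- part 2
  intro heven η hη
  have hη1 : mink η η = 1 := hη
  have hη' := hη1
  rw [mink_expand] at hη'
  have hnη : -η ∈ Hyp := by
    show mink (-η) (-η) = 1
    simp only [mink_expand, Pi.neg_apply]
    linear_combination hη'
  have h1 := part1 η hη
  have h2 := part1 (-η) hnη
  have h3 : mink v (-η) = -(mink v η) := by
    rw [mink_comm, mink_neg_left, mink_comm]
  have h4 := heven η hη
  rw [h2, h3, ← h1] at h4
  linarith
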